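/- Let S be a semigroup and T a subsemigroup of S such that the complement S \ T is a two-sided ideal of S. If S is finitely right equated, then T is finitely right equated. -/

import Mathlib

/-- The right annihilator congruence `r_S(a) = {(s,t) : a*s = a*t}`. -/
def rAnn {S : Type*} [Semigroup S] (a : S) : S → S → Prop :=
  fun s t => a * s = a * t

/-- A right congruence on a semigroup: an equivalence relation compatible with
right multiplication. -/
def IsRightCong {S : Type*} [Semigroup S] (ρ : S → S → Prop) : Prop :=
  Equivalence ρ ∧ ∀ a b s : S, ρ a b → ρ (a * s) (b * s)

/-- The smallest right congruence containing the relation `X`. -/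
def rcGen {S : Type*} [Semigroup S] (X : S → S → Prop) : S → S → Prop :=
  fun a b => ∀ ρ : S → S → Prop, IsRightCong ρ → (∀ x y, X x y → ρ x y) → ρ a b

/-- A right congruence is finitely generated if it is generated by a finite
set of pairs. -/
def FGRightCong {S : Type*} [Semigroup S] (ρ : S → S → Prop) : Prop :=
  ∃ X : Finset (S × S), ρ = rcGen (fun a b => (a, b) ∈ X)

/-- A semigroup is finitely right equated if every right annihilator
congruence is finitely generated. -/
def FRE (S : Type*) [Semigroup S] : Prop :=
  ∀ a : S, FGRightCong (rAnn a)

/-- `XS¹ = X ∪ XS` for a subset `X` of a semigroup `S`. -/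
def RS1 {S : Type*} [Semigroup S] (X : Set S) : Set S :=
  X ∪ {y | ∃ x ∈ X, ∃ s : S, y = x * s}


/-!
Because `S \ T` is an ideal, `x * y ∈ T` iff `x, y ∈ T`. Hence every right congruence `ρ` on `T`
extends to the right congruence `ρ ∪ (S \ T)²` on `S`, and for `a ∈ T` the equation
`a * x = a * y` forces `x, y` to lie both in `T` or both outside it. So if `X` generates `r_S(a)`,
any right congruence on `T` containing `X ∩ (T × T)` extends to one containing `X`, hence
containing `r_T(a)`: the finite set `X ∩ (T × T)` generates `r_T(a)`.
-/

section RightCong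

variable {S : Type*} [Semigroup S]

theorem rcGen_of_mem {X : S → S → Prop} {x y : S} (h : X x y) : rcGen X x y :=
  fun _ _ hX => hX x y h

theorem isRightCong_rAnn (a : S) : IsRightCong (rAnn a) :=
  ⟨⟨fun _ => rfl, Eq.symm, Eq.trans⟩, fun x y s (h : a * x = a * y) => by
    show a * (x * s) = a * (y * s)
    rw [← mul_assoc, ← mul_assoc, h]⟩

end RightCong

section IdealComplement

variable {S : Type*} [Semigroup S] {T : Subsemigroup S}

/-- The relation `ρ ∪ (S \ T)²` on `S`. -/
def extendRel (T : Subsemigroup S) (ρ : T → T → Prop) : S → S → Prop :=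
  fun p q => (p ∈ T ↔ q ∈ T) ∧ ∀ (hp : p ∈ T) (hq : q ∈ T), ρ ⟨p, hp⟩ ⟨q, hq⟩

theorem mul_mem_iff_of_compl_ideal (hl : ∀ s : S, ∀ a ∉ T, s * a ∉ T)
    (hr : ∀ a ∉ T, ∀ s : S, a * s ∉ T) {x y : S} : x * y ∈ T ↔ x ∈ T ∧ y ∈ T :=
  ⟨fun h => ⟨not_not.1 fun hx => hr x hx y h, not_not.1 fun hy => hl x y hy h⟩,
    fun h => mul_mem h.1 h.2⟩

theorem isRightCong_extendRel (hl : ∀ s : S, ∀ a ∉ T, s * a ∉ T)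
    (hr : ∀ a ∉ T, ∀ s : S, a * s ∉ T) {ρ : T → T → Prop} (hρ : IsRightCong ρ) :
    IsRightCong (extendRel T ρ) := by
  refine ⟨⟨fun p => ⟨Iff.rfl, fun _ _ => hρ.1.refl _⟩, ?symm, ?trans⟩, ?compat⟩
  case symm => exact fun ⟨hpq, h⟩ => ⟨hpq.symm, fun hq hp => hρ.1.symm (h hp hq)⟩
  case trans =>
    exact fun ⟨hpq, h₁⟩ ⟨hqr, h₂⟩ => ⟨hpq.trans hqr, fun hp hr' =>
      hρ.1.trans (h₁ hp (hpq.1 hp)) (h₂ (hpq.1 hp) hr')⟩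
  case compat =>
    rintro p q u ⟨hpq, h⟩
    simp only [extendRel, mul_mem_iff_of_compl_ideal hl hr]
    refine ⟨and_congr_left fun _ => hpq, fun ⟨hp, hu⟩ ⟨hq, _⟩ => ?_⟩
    exact hρ.2 ⟨p, hp⟩ ⟨q, hq⟩ ⟨u, hu⟩ (h hp hq)

noncomputable def restrictPairs (T : Subsemigroup S) (X : Finset (S × S)) : Finset (T × T) :=
  X.preimage (Prod.map Subtype.val Subtype.val)
    (Subtype.val_injective.prodMap Subtype.val_injective).injOn

theorem mem_restrictPairs {X : Finset (S × S)} {x y : T} :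
    (x, y) ∈ restrictPairs T X ↔ ((x : S), (y : S)) ∈ X :=
  Finset.mem_preimage

theorem rAnn_eq_rcGen_restrictPairs (hl : ∀ s : S, ∀ a ∉ T, s * a ∉ T)
    (hr : ∀ a ∉ T, ∀ s : S, a * s ∉ T) (a : T) {X : Finset (S × S)}
    (hX : rAnn (a : S) = rcGen (fun x y => (x, y) ∈ X)) :
    rAnn a = rcGen (fun x y => (x, y) ∈ restrictPairs T X) := by
  have hXann : ∀ x y : S, (x, y) ∈ X → (a : S) * x = a * y := fun x y hxy =>
    (hX ▸ rcGen_of_mem hxy : rAnn (a : S) x y)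
  have mem_iff_mul_mem : ∀ z : S, z ∈ T ↔ (a : S) * z ∈ T := fun z => by
    rw [mul_mem_iff_of_compl_ideal hl hr, and_iff_right a.2]
  funext s t
  refine propext ⟨fun hst ρ hρ hgen => ?_, fun hst => ?_⟩
  · have hst' : rcGen (fun x y => (x, y) ∈ X) (s : S) t := hX ▸ congrArg Subtype.val hst
    refine (hst' _ (isRightCong_extendRel hl hr hρ) fun x y hxy => ⟨?_, ?_⟩).2 s.2 t.2
    · rw [mem_iff_mul_mem x, mem_iff_mul_mem y, hXann x y hxy]
    · exact fun hx hy => hgen _ _ (mem_restrictPairs.2 hxy)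
  · refine hst _ (isRightCong_rAnn a) fun x y hxy => Subtype.ext ?_
    exact hXann x y (mem_restrictPairs.1 hxy)

end IdealComplement

theorem stmt16_general {S : Type*} [Semigroup S] (T : Subsemigroup S)
    (hl : ∀ s : S, ∀ a ∈ (↑T : Set S)ᶜ, s * a ∈ (↑T : Set S)ᶜ)
    (hr : ∀ a ∈ (↑T : Set S)ᶜ, ∀ s : S, a * s ∈ (↑T : Set S)ᶜ)
    (hS : FRE S) : FRE ↥T := by
  intro a
  obtain ⟨X, hX⟩ := hS a
  exact ⟨restrictPairs T X, rAnn_eq_rcGen_restrictPairs hl hr a hX⟩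

theorem stmt16 {S : Type*} [Semigroup S] (T : Subsemigroup S)
    (hne : ((↑T : Set S)ᶜ).Nonempty)
    (hl : ∀ s : S, ∀ a ∈ (↑T : Set S)ᶜ, s * a ∈ (↑T : Set S)ᶜ)
    (hr : ∀ a ∈ (↑T : Set S)ᶜ, ∀ s : S, a * s ∈ (↑T : Set S)ᶜ)
    (hS : FRE S) : FRE ↥T :=
  stmt16_general T hl hr hS
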